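/- Let A be an n×n real symmetric matrix (n ≥ 2) all of whose diagonal entries equal a common value q. Then for every real x, min_{i≠j} (1/2)(d_i(A,x) + d_j(A,x)) = min_{1≤k≤2n−1} (p_k x + q_k), where p_k = n − 1 − k and q_k = min_{i≠j} ( q + (1/2)(Σ_{m<k} y_m − Σ_{m≥k} y_m) ), with y_1 ≤ … ≤ y_{2n−2} the off-diagonal entries of rows i and j of A arranged together in nondecreasing order. That is, the averaged shifted Gershgorin bounding function is piecewise linear, cut out by 2n−1 lines. -/

import Mathlib

/-!
For a pair `i ≠ j`, `(d_i + d_j)/2 = q - x - (1/2) Σ_m |y_m - x|`. For every `k` the signed sum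
`Σ_{m<k} (x - y_m) + Σ_{m≥k} (y_m - x)` is at most `Σ_m |y_m - x|`, with equality when `k` is the
number of `y_m` below `x`, since the `y_m` are sorted. Rewritten, the `k`-th signed sum is the
`k`-th line `p_k x + q + δ_{i,j,k}/2`, so each pair's average is the minimum of its `2n - 1` lines,
and exchanging the minima over pairs and over lines gives the theorem.
-/

/-- The shifted Gershgorin row function d_i(A,x) = a_{ii} − x − Σ_{j≠i} |a_{ij} − x|. -/
noncomputable def gershLower (n : ℕ) (A : Matrix (Fin n) (Fin n) ℝ) (x : ℝ) (i : Fin n) : ℝ :=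
  A i i - x - ∑ j ∈ Finset.univ.erase i, |A i j - x|

/-- `δ_{i,j,k} = Σ_{m<k} y_m − Σ_{m≥k} y_m` for the merged sorted off-diagonal entries
`y i j` of rows `i` and `j` (here `k : Fin (2n−1)` has paper index `k+1`). -/
noncomputable def deltaIJK (n : ℕ) (y : Fin n → Fin n → Fin (2 * n - 2) → ℝ)
    (i j : Fin n) (k : Fin (2 * n - 1)) : ℝ :=
  (∑ m ∈ Finset.univ.filter (fun m : Fin (2 * n - 2) => (m : ℕ) < (k : ℕ)), y i j m) -
  (∑ m ∈ Finset.univ.filter (fun m : Fin (2 * n - 2) => (k : ℕ) ≤ (m : ℕ)), y i j m)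

open Finset

lemma Monotone.filter_val_lt_card_eq {α : Type*} [LinearOrder α] {N : ℕ} {y : Fin N → α}
    (hy : Monotone y) (x : α) :
    univ.filter (fun m : Fin N => (m : ℕ) < #(univ.filter (y · < x))) =
      univ.filter (y · < x) := by
  ext m
  simpa using Fin.lt_card_filter_univ_iff_apply_of_imp (y · < x)
    (fun _ _ hle hlt => (hy hle).trans_lt hlt)

section SignedDeviation

variable {ι : Type*} [Fintype ι] [DecidableEq ι] (y : ι → ℝ) (x : ℝ)

lemma sum_sub_add_sum_compl_sub_le_sum_abs_sub (s : Finset ι) :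
    ∑ m ∈ s, (x - y m) + ∑ m ∈ sᶜ, (y m - x) ≤ ∑ m, |y m - x| := by
  rw [← sum_add_sum_compl s]
  gcongr with m
  · rw [abs_sub_comm]; exact le_abs_self _
  · exact le_abs_self _

lemma sum_sub_add_sum_compl_sub_eq_sum_abs_sub :
    ∑ m ∈ univ.filter (y · < x), (x - y m) + ∑ m ∈ (univ.filter (y · < x))ᶜ, (y m - x) =
      ∑ m, |y m - x| := by
  rw [← sum_add_sum_compl (univ.filter (y · < x))]
  congr 1
  · refine sum_congr rfl fun m hm => ?_
    rw [abs_of_neg (sub_neg.2 (mem_filter.1 hm).2), neg_sub]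
  · refine sum_congr rfl fun m hm => ?_
    rw [compl_filter, mem_filter, not_lt] at hm
    rw [abs_of_nonneg (sub_nonneg.2 hm.2)]

end SignedDeviation

section SplitDeviation

variable {N : ℕ} (y : Fin N → ℝ) (x : ℝ)

noncomputable def splitDiff (k : ℕ) : ℝ :=
  (∑ m ∈ univ.filter (fun m : Fin N => (m : ℕ) < k), y m) -
    ∑ m ∈ univ.filter (fun m : Fin N => k ≤ (m : ℕ)), y m

noncomputable def splitDeviation (k : ℕ) : ℝ :=
  (∑ m ∈ univ.filter (fun m : Fin N => (m : ℕ) < k), (x - y m)) +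
    ∑ m ∈ univ.filter (fun m : Fin N => k ≤ (m : ℕ)), (y m - x)

lemma compl_filter_val_lt (k : ℕ) :
    (univ.filter (fun m : Fin N => (m : ℕ) < k))ᶜ =
      univ.filter (fun m : Fin N => k ≤ (m : ℕ)) := by
  simp only [compl_filter, not_lt]

lemma splitDeviation_eq {k : ℕ} (hk : k ≤ N) :
    splitDeviation y x k = (2 * k - N) * x - splitDiff y k := by
  have hcard : #(univ.filter (fun m : Fin N => k ≤ (m : ℕ))) = N - k := by
    rw [← compl_filter_val_lt, card_compl, Fintype.card_fin, Fin.card_filter_val_lt,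
      min_eq_right hk]
  simp only [splitDeviation, splitDiff, sum_sub_distrib, sum_const, nsmul_eq_mul, hcard,
    Fin.card_filter_val_lt, min_eq_right hk, Nat.cast_sub hk]
  ring

lemma splitDeviation_le_sum_abs_sub (k : ℕ) : splitDeviation y x k ≤ ∑ m, |y m - x| := by
  rw [splitDeviation, ← compl_filter_val_lt]
  exact sum_sub_add_sum_compl_sub_le_sum_abs_sub y x _

lemma Monotone.exists_splitDeviation_eq_sum_abs_sub (hy : Monotone y) :
    ∃ k ≤ N, splitDeviation y x k = ∑ m, |y m - x| := by
  refine ⟨#(univ.filter (y · < x)), card_le_univ _ |>.trans (Fintype.card_fin N).le, ?_⟩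
  rw [splitDeviation, ← compl_filter_val_lt, hy.filter_val_lt_card_eq x]
  exact sum_sub_add_sum_compl_sub_eq_sum_abs_sub y x

end SplitDeviation

lemma Finite.ciInf_comm {α ι κ : Type*} [ConditionallyCompleteLattice α] [Finite ι] [Finite κ]
    [Nonempty ι] [Nonempty κ] (f : ι → κ → α) : ⨅ i, ⨅ k, f i k = ⨅ k, ⨅ i, f i k :=
  le_antisymm (le_ciInf fun k => le_ciInf fun i => ciInf_le_of_le i (ciInf_le _ k))
    (le_ciInf fun i => le_ciInf fun k => ciInf_le_of_le k (ciInf_le _ i))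

lemma sum_comp_sumElim_rows {ι α β : Type*} [Fintype ι] [DecidableEq ι] [AddCommMonoid β]
    {M : ℕ} (A : ι → ι → α) {i j : ι} (Y : Fin M → α)
    (e : Fin M ≃ ({k : ι // k ≠ i} ⊕ {k : ι // k ≠ j}))
    (hY : ∀ m, Y m = Sum.elim (fun k : {k : ι // k ≠ i} => A i k.1)
      (fun k : {k : ι // k ≠ j} => A j k.1) (e m)) (f : α → β) :
    ∑ m, f (Y m) = ∑ k ∈ univ.erase i, f (A i k) + ∑ k ∈ univ.erase j, f (A j k) := by
  simp_rw [hY]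
  rw [e.sum_comp (fun s => f (Sum.elim _ _ s)), Fintype.sum_sum_type]
  simp only [Sum.elim_inl, Sum.elim_inr]
  rw [sum_subtype (univ.erase i) (p := (· ≠ i)) (by simp),
    sum_subtype (univ.erase j) (p := (· ≠ j)) (by simp)]

section Gershgorin

variable {n : ℕ} {A : Matrix (Fin n) (Fin n) ℝ} {q : ℝ}
  {y : Fin n → Fin n → Fin (2 * n - 2) → ℝ} {i j : Fin n}

lemma deltaIJK_eq_splitDiff (k : Fin (2 * n - 1)) : deltaIJK n y i j k = splitDiff (y i j) k :=
  rfl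

lemma gershLower_add_gershLower_eq (hq : ∀ i, A i i = q)
    (e : Fin (2 * n - 2) ≃ ({k : Fin n // k ≠ i} ⊕ {k : Fin n // k ≠ j}))
    (hy : ∀ m, y i j m = Sum.elim (fun k : {k : Fin n // k ≠ i} => A i k.1)
      (fun k : {k : Fin n // k ≠ j} => A j k.1) (e m)) (x : ℝ) :
    gershLower n A x i + gershLower n A x j = 2 * (q - x) - ∑ m, |y i j m - x| := by
  rw [sum_comp_sumElim_rows A (y i j) e hy (|· - x|), gershLower, gershLower, hq, hq]
  ring

lemma half_gershLower_add_eq_iInf (hq : ∀ i, A i i = q)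
    (e : Fin (2 * n - 2) ≃ ({k : Fin n // k ≠ i} ⊕ {k : Fin n // k ≠ j}))
    (hy : ∀ m, y i j m = Sum.elim (fun k : {k : Fin n // k ≠ i} => A i k.1)
      (fun k : {k : Fin n // k ≠ j} => A j k.1) (e m))
    (hmono : Monotone (y i j)) (x : ℝ) :
    (1 / 2) * (gershLower n A x i + gershLower n A x j) =
      ⨅ k : Fin (2 * n - 1),
        (((n : ℝ) - 1 - ((k : ℕ) + 1)) * x + (q + deltaIJK n y i j k / 2)) := by
  have hn : 1 ≤ n := i.pos
  have : Nonempty (Fin (2 * n - 1)) := ⟨⟨0, by omega⟩⟩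
  have hline : ∀ k : Fin (2 * n - 1), ((n : ℝ) - 1 - ((k : ℕ) + 1)) * x +
      (q + deltaIJK n y i j k / 2) = q - x - splitDeviation (y i j) x k / 2 := fun k => by
    rw [splitDeviation_eq _ _ (by omega), deltaIJK_eq_splitDiff, Nat.cast_sub (by omega)]
    push_cast
    ring
  simp_rw [hline, gershLower_add_gershLower_eq hq e hy x]
  obtain ⟨k, hk, hkeq⟩ := Monotone.exists_splitDeviation_eq_sum_abs_sub (y i j) x hmono
  refine le_antisymm (le_ciInf fun k => ?_) (Finite.ciInf_le_of_le ⟨k, by omega⟩ ?_)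
  · linarith [splitDeviation_le_sum_abs_sub (y i j) x k]
  · rw [hkeq]
    linarith

end Gershgorin

theorem averaged_gershgorin_piecewise_linear_general (n : ℕ) (hn : 2 ≤ n)
    (A : Matrix (Fin n) (Fin n) ℝ)
    (q : ℝ) (hq : ∀ i, A i i = q)
    (y : Fin n → Fin n → Fin (2 * n - 2) → ℝ)
    (e : ∀ i j : Fin n, i ≠ j →
      (Fin (2 * n - 2) ≃ ({k : Fin n // k ≠ i} ⊕ {k : Fin n // k ≠ j})))
    (hy : ∀ (i j : Fin n) (h : i ≠ j) (m : Fin (2 * n - 2)),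
      y i j m = Sum.elim (fun k : {k : Fin n // k ≠ i} => A i k.1)
        (fun k : {k : Fin n // k ≠ j} => A j k.1) (e i j h m))
    (hmono : ∀ i j : Fin n, i ≠ j → Monotone (y i j)) (x : ℝ) :
    (⨅ p : {p : Fin n × Fin n // p.1 ≠ p.2},
        (1 / 2) * (gershLower n A x p.1.1 + gershLower n A x p.1.2)) =
      ⨅ k : Fin (2 * n - 1),
        (((n : ℝ) - 1 - ((k : ℕ) + 1)) * x +
          ⨅ p : {p : Fin n × Fin n // p.1 ≠ p.2},
            (q + deltaIJK n y p.1.1 p.1.2 k / 2)) := by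
  have : Nonempty {p : Fin n × Fin n // p.1 ≠ p.2} :=
    ⟨⟨(⟨0, by omega⟩, ⟨1, by omega⟩), by simp [Fin.ext_iff]⟩⟩
  have : Nonempty (Fin (2 * n - 1)) := ⟨⟨0, by omega⟩⟩
  calc _ = ⨅ p : {p : Fin n × Fin n // p.1 ≠ p.2}, ⨅ k : Fin (2 * n - 1),
          (((n : ℝ) - 1 - ((k : ℕ) + 1)) * x + (q + deltaIJK n y p.1.1 p.1.2 k / 2)) :=
        iInf_congr fun p => half_gershLower_add_eq_iInf hq (e _ _ p.2) (hy _ _ p.2)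
          (hmono _ _ p.2) x
    _ = _ := Finite.ciInf_comm _
    _ = _ := iInf_congr fun k => (add_ciInf (Finite.bddBelow_range _) _).symm

/-- Piecewise-linear structure of the averaged shifted Gershgorin bound for a symmetric
matrix with constant diagonal `q`: with `y i j` listing the `2n−2` off-diagonal entries of
rows `i` and `j` in nondecreasing order, `p_k = n − 1 − k` and
`q_k = min_{i≠j} (q + δ_{i,j,k}/2)` (paper index `k+1` for `k : Fin (2n−1)`), one has for
every real `x`: `min_{i≠j} (d_i(A,x) + d_j(A,x))/2 = min_{1≤k≤2n−1} (p_k x + q_k)`. -/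
theorem averaged_gershgorin_piecewise_linear (n : ℕ) (hn : 2 ≤ n)
    (A : Matrix (Fin n) (Fin n) ℝ) (hA : A.IsSymm)
    (q : ℝ) (hq : ∀ i, A i i = q)
    (y : Fin n → Fin n → Fin (2 * n - 2) → ℝ)
    (e : ∀ i j : Fin n, i ≠ j →
      (Fin (2 * n - 2) ≃ ({k : Fin n // k ≠ i} ⊕ {k : Fin n // k ≠ j})))
    (hy : ∀ (i j : Fin n) (h : i ≠ j) (m : Fin (2 * n - 2)),
      y i j m = Sum.elim (fun k : {k : Fin n // k ≠ i} => A i k.1)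
        (fun k : {k : Fin n // k ≠ j} => A j k.1) (e i j h m))
    (hmono : ∀ i j : Fin n, i ≠ j → Monotone (y i j)) (x : ℝ) :
    (⨅ p : {p : Fin n × Fin n // p.1 ≠ p.2},
        (1 / 2) * (gershLower n A x p.1.1 + gershLower n A x p.1.2)) =
      ⨅ k : Fin (2 * n - 1),
        (((n : ℝ) - 1 - ((k : ℕ) + 1)) * x +
          ⨅ p : {p : Fin n × Fin n // p.1 ≠ p.2},
            (q + deltaIJK n y p.1.1 p.1.2 k / 2)) :=
  averaged_gershgorin_piecewise_linear_general n hn A q hq y e hy hmono x
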